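/- For every n ∈ ℕ, the diagonal polynomial P_n has exactly N(n) zeros in the open interval (0,∞), all of them simple, where N(n) = 2n/3 if n ≡ 0 (mod 3), N(n) = 2(n−1)/3 if n ≡ 1 (mod 3), and N(n) = 2(n−2)/3 + 1 if n ≡ 2 (mod 3). Moreover, x = 0 is not a zero of P_n when n ≡ 0 (mod 3), is a zero of multiplicity exactly 2 when n ≡ 1 (mod 3), and is a zero of multiplicity exactly 1 when n ≡ 2 (mod 3). -/

import Mathlib

/-- The primitive third root of unity `ω = exp(2πi/3)`. -/
noncomputable def ω : ℂ := Complex.exp (2 * Real.pi * Complex.I / 3)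

/-- The diagonal multiple orthogonal polynomial
`P n x = (−1)ⁿ 3⁻ⁿ e^{x³} (d/dx)ⁿ e^{−x³}` (that is, `P_{n,n}` for the
exponential cubic weight). -/
noncomputable def P (n : ℕ) : ℂ → ℂ := fun x =>
  (-1) ^ n / 3 ^ n * Complex.exp (x ^ 3) *
    iteratedDeriv n (fun z => Complex.exp (-z ^ 3)) x

/-- The number of strictly positive real zeros of `Pₙ`. -/
def N (n : ℕ) : ℕ :=
  if n % 3 = 0 then 2 * n / 3
  else if n % 3 = 1 then 2 * (n - 1) / 3
  else 2 * (n - 2) / 3 + 1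

/-!
Since `(e^{-x³} Q)' = -3 e^{-x³} (x² Q - Q'/3)`, the polynomials `Pₙ` satisfy
`Pₙ₊₁ = x² Pₙ - Pₙ'/3`, and this recursion shows `Pₙ = x^{2n mod 3} Rₙ(x³)` with `Rₙ` monic of
degree `N n = ⌊2n/3⌋`. Rolle's theorem for `e^{-x³} Pₙ` on `[0, ∞)`, between consecutive zeros
(`0` included when `2n mod 3 ≠ 0`) and past the last one (the function decays at `+∞`), gives
`N (n + 1)` distinct positive zeros of `Pₙ₊₁`, hence, after cubing, `deg Rₙ₊₁` distinct roots of
`Rₙ₊₁`. So `Pₙ = x^{2n mod 3} ∏ (x³ - s³)` over the positive zeros `s`, and over `ℝ` the factor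
`x³ - s³` has the single, simple root `s`.
-/

open Polynomial Set Filter Topology

theorem N_eq_two_mul_div_three (n : ℕ) : N n = 2 * n / 3 := by
  unfold N; split_ifs <;> omega

theorem Polynomial.Monic.eq_prod_X_sub_C_of_isRoot {R : Type*} [CommRing R] [IsDomain R]
    {p : R[X]} (hp : p.Monic) {s : Finset R} (hdeg : p.natDegree = s.card)
    (hroot : ∀ a ∈ s, p.IsRoot a) : p = ∏ a ∈ s, (X - C a) := by
  have hle : s.val ≤ p.roots :=
    (Multiset.le_iff_subset s.nodup).2 fun a ha => (mem_roots hp.ne_zero).2 (hroot a ha)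
  have hroots : p.roots = s.val :=
    (Multiset.eq_of_le_of_card_le hle ((card_roots' p).trans hdeg.le)).symm
  rw [← prod_multiset_X_sub_C_of_monic_of_roots_card_eq hp (by rw [hroots, hdeg]; rfl), hroots]
  rfl

theorem roots_X_pow_three_sub_C_pow_three {K : Type*} [Field K] [LinearOrder K]
    [IsStrictOrderedRing K] {x : K} (hx : x ≠ 0) : (X ^ 3 - C (x ^ 3)).roots = {x} := by
  have hfactor : (X ^ 3 - C (x ^ 3) : K[X]) = (X - C x) * (X ^ 2 + C x * X + C (x ^ 2)) := by
    simp only [map_pow]; ring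
  have hquad : (X ^ 2 + C x * X + C (x ^ 2) : K[X]).roots = 0 := by
    refine Multiset.eq_zero_of_forall_notMem fun y hy => ?_
    have hy : y ^ 2 + x * y + x ^ 2 = 0 := by simpa using (mem_roots'.1 hy).2
    nlinarith [sq_nonneg (2 * y + x), sq_pos_of_ne_zero hx]
  rw [hfactor, roots_mul (hfactor ▸ (monic_X_pow_sub_C _ three_ne_zero).ne_zero),
    roots_X_sub_C, hquad, add_zero]

noncomputable def diagPoly : ℕ → ℝ[X]
  | 0 => 1
  | n + 1 => X ^ 2 * diagPoly n - C (1 / 3) * derivative (diagPoly n)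

theorem diagPoly_monic_and_natDegree (n : ℕ) :
    (diagPoly n).Monic ∧ (diagPoly n).natDegree = 2 * n := by
  induction n with
  | zero => simp [diagPoly]
  | succ n ih =>
    obtain ⟨hmonic, hdeg⟩ := ih
    have hlead : (X ^ 2 * diagPoly n).natDegree = 2 * (n + 1) := by
      rw [(monic_X_pow 2).natDegree_mul hmonic, natDegree_X_pow, hdeg]; ring
    have hlt : (C (1 / 3 : ℝ) * derivative (diagPoly n)).natDegree
        < (X ^ 2 * diagPoly n).natDegree :=
      calc _ ≤ (derivative (diagPoly n)).natDegree := natDegree_C_mul_le _ _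
        _ ≤ 2 * n - 1 := hdeg ▸ natDegree_derivative_le _
        _ < _ := by omega
    exact ⟨((monic_X_pow 2).mul hmonic).sub_of_left (degree_lt_degree hlt),
      (natDegree_sub_eq_left_of_natDegree_lt hlt).trans hlead⟩

theorem exists_X_sq_mul_sub_derivative_eq {a : ℕ} (ha : a < 3) (R : ℝ[X]) :
    ∃ S : ℝ[X], X ^ 2 * (X ^ a * expand ℝ 3 R) - C (1 / 3) * derivative (X ^ a * expand ℝ 3 R)
      = X ^ ((a + 2) % 3) * expand ℝ 3 S := by
  have h3 : C (1 / 3 : ℝ) * 3 = 1 := by rw [← C_ofNat, ← C_mul]; norm_num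
  have h2 : C (1 / 3 : ℝ) * 2 = C (2 / 3) := by rw [← C_ofNat, ← C_mul]; norm_num
  simp only [derivative_mul, derivative_expand, derivative_X_pow, Nat.cast_ofNat]
  interval_cases a
  · refine ⟨R - derivative R, ?_⟩
    simp only [map_sub, CharP.cast_eq_zero, map_zero]
    linear_combination (-(X ^ 2 * expand ℝ 3 (derivative R))) * h3
  · refine ⟨X * (R - derivative R) - C (1 / 3) * R, ?_⟩
    simp only [map_sub, map_mul, expand_X, expand_C, Nat.cast_one, map_one]
    linear_combination (-(X ^ 3 * expand ℝ 3 (derivative R))) * h3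
  · refine ⟨X * (R - derivative R) - C (2 / 3) * R, ?_⟩
    simp only [map_sub, map_mul, expand_X, expand_C, Nat.cast_ofNat, map_ofNat]
    linear_combination (-(X ^ 4 * expand ℝ 3 (derivative R))) * h3 - X * expand ℝ 3 R * h2

theorem exists_diagPoly_eq_X_pow_mul_expand (n : ℕ) : ∃ R : ℝ[X], R.Monic ∧
    R.natDegree = N n ∧ diagPoly n = X ^ (2 * n % 3) * expand ℝ 3 R := by
  obtain ⟨R, hR⟩ : ∃ R : ℝ[X], diagPoly n = X ^ (2 * n % 3) * expand ℝ 3 R := by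
    induction n with
    | zero => exact ⟨1, by simp [diagPoly]⟩
    | succ n ih =>
      obtain ⟨R, hR⟩ := ih
      obtain ⟨S, hS⟩ := exists_X_sq_mul_sub_derivative_eq (Nat.mod_lt (2 * n) three_pos) R
      refine ⟨S, ?_⟩
      rw [diagPoly, hR, hS]
      congr 2
      omega
  obtain ⟨hmonic, hdeg⟩ := diagPoly_monic_and_natDegree n
  rw [hR] at hmonic hdeg
  have hexpand : (expand ℝ 3 R).Monic := (monic_X_pow _).of_mul_monic_left hmonic
  rw [(monic_X_pow _).natDegree_mul hexpand, natDegree_X_pow, natDegree_expand] at hdeg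
  refine ⟨R, (monic_expand_iff three_pos).1 hexpand, ?_, hR⟩
  rw [N_eq_two_mul_div_three]
  omega

section Weight

variable {𝕜 : Type*} [NontriviallyNormedField 𝕜] [Algebra ℝ 𝕜] {e : 𝕜 → 𝕜}

theorem hasDerivAt_mul_aeval_diagPoly (he : ∀ x, HasDerivAt e (-3 * x ^ 2 * e x) x) (n : ℕ)
    (x : 𝕜) : HasDerivAt (fun z => e z * aeval z (diagPoly n))
      (-3 * (e x * aeval x (diagPoly (n + 1)))) x := by
  refine ((he x).mul (Polynomial.hasDerivAt_aeval _ x)).congr_deriv ?_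
  have h3 : algebraMap ℝ 𝕜 (1 / 3) * 3 = 1 := by
    rw [← map_ofNat (algebraMap ℝ 𝕜) 3, ← map_mul]; norm_num
  simp only [diagPoly, map_sub, map_mul, map_pow, aeval_X, aeval_C]
  linear_combination (-(e x * aeval x (derivative (diagPoly n)))) * h3

theorem iteratedDeriv_eq_mul_aeval_diagPoly (he : ∀ x, HasDerivAt e (-3 * x ^ 2 * e x) x)
    (n : ℕ) : iteratedDeriv n e = fun x => (-3) ^ n * (e x * aeval x (diagPoly n)) := by
  induction n with
  | zero => funext x; simp [diagPoly]
  | succ n ih =>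
    funext x
    rw [iteratedDeriv_succ, ih, ((hasDerivAt_mul_aeval_diagPoly he n x).const_mul _).deriv]
    ring

end Weight

theorem P_eq_aeval_diagPoly (n : ℕ) (x : ℂ) : P n x = aeval x (diagPoly n) := by
  have hexp (z : ℂ) : HasDerivAt (fun z => Complex.exp (-z ^ 3))
      (-3 * z ^ 2 * Complex.exp (-z ^ 3)) z :=
    ((hasDerivAt_pow 3 z).fun_neg.cexp).congr_deriv (by push_cast; ring)
  have hinv : Complex.exp (x ^ 3) * Complex.exp (-x ^ 3) = 1 := by
    rw [← Complex.exp_add, add_neg_cancel, Complex.exp_zero]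
  have hsign : (-1 : ℂ) ^ n * (-3) ^ n = 3 ^ n := by rw [← mul_pow]; norm_num
  rw [P, iteratedDeriv_eq_mul_aeval_diagPoly hexp]
  field_simp
  linear_combination
    (Complex.exp (x ^ 3) * Complex.exp (-x ^ 3) * aeval x (diagPoly n)) * hsign
      + (3 ^ n * aeval x (diagPoly n)) * hinv

theorem exists_isLocalExtr_Ioi_of_tendsto_zero {f : ℝ → ℝ} {a b : ℝ}
    (hf : ContinuousOn f (Ici a)) (hab : a < b) (hfa : f a = 0) (hfb : f b ≠ 0)
    (hlim : Tendsto f atTop (𝓝 0)) : ∃ c ∈ Ioi a, IsLocalExtr f c := by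
  wlog hpos : 0 < f b generalizing f
  · obtain ⟨c, hc, hext⟩ := this hf.neg (by simp [hfa]) (neg_ne_zero.2 hfb)
      (by simpa [Pi.neg_def] using hlim.neg) (by simpa using lt_of_le_of_ne (not_lt.1 hpos) hfb)
    exact ⟨c, hc, by simpa using hext.neg⟩
  have hev : ∀ᶠ x in cocompact ℝ ⊓ 𝓟 (Ici a), f x ≤ f b := by
    rw [cocompact_eq_atBot_atTop, inf_sup_right, (disjoint_atBot_principal_Ici a).eq_bot,
      bot_sup_eq]
    exact ((hlim.eventually (gt_mem_nhds hpos)).mono fun _ h => h.le).filter_mono inf_le_left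
  obtain ⟨c, hc, hmax⟩ := hf.exists_isMaxOn' isClosed_Ici hab.le hev
  have hac : a < c := lt_of_le_of_ne hc (by rintro rfl; linarith [isMaxOn_iff.1 hmax b hab.le])
  exact ⟨c, hac, hmax.isExtr.isLocalExtr (Ici_mem_nhds hac)⟩

theorem exists_finset_deriv_eq_zero {f : ℝ → ℝ} (hf : Differentiable ℝ f)
    (hlim : Tendsto f atTop (𝓝 0)) (hne : ∀ b, ∃ x, b < x ∧ f x ≠ 0) (Z : Finset ℝ)
    (hZ : ∀ z ∈ Z, f z = 0) :
    ∃ C : Finset ℝ, C.card = Z.card ∧ ∀ c ∈ C, (∃ z ∈ Z, z < c) ∧ deriv f c = 0 := by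
  set z := Z.orderEmbOfFin rfl
  have hcrit : ∀ i, ∃ c, z i < c ∧ (∀ j, i < j → c < z j) ∧ deriv f c = 0 := by
    intro i
    by_cases hi : i.val + 1 < Z.card
    · set i' : Fin Z.card := ⟨i + 1, hi⟩
      have hii' : i < i' := Fin.lt_def.2 (lt_add_one _)
      obtain ⟨c, hc, hderiv⟩ :=
        exists_deriv_eq_zero (z.strictMono hii') hf.continuous.continuousOn
        ((hZ _ (Z.orderEmbOfFin_mem rfl i)).trans (hZ _ (Z.orderEmbOfFin_mem rfl i')).symm)
      exact ⟨c, hc.1, fun j hj => hc.2.trans_le (z.monotone (Fin.le_def.2 (Fin.lt_def.1 hj))),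
        hderiv⟩
    · obtain ⟨b, hb, hfb⟩ := hne (z i)
      obtain ⟨c, hc, hext⟩ := exists_isLocalExtr_Ioi_of_tendsto_zero hf.continuous.continuousOn
        hb (hZ _ (Z.orderEmbOfFin_mem rfl _)) hfb hlim
      exact ⟨c, hc, fun j hj => absurd (Fin.lt_def.1 hj) (by omega), hext.deriv_eq_zero⟩
  choose c hzc hcz hc using hcrit
  have hmono : StrictMono c := fun i j hij => (hcz i j hij).trans (hzc j)
  refine ⟨Finset.univ.map ⟨c, hmono.injective⟩, by simp, ?_⟩
  simp only [Finset.mem_map, Finset.mem_univ, true_and, Function.Embedding.coeFn_mk]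
  rintro _ ⟨i, rfl⟩
  exact ⟨⟨z i, Z.orderEmbOfFin_mem rfl i, hzc i⟩, hc i⟩

theorem tendsto_pow_mul_exp_neg_cube (i : ℕ) :
    Tendsto (fun x : ℝ => x ^ i * Real.exp (-x ^ 3)) atTop (𝓝 0) := by
  refine tendsto_of_tendsto_of_tendsto_of_le_of_le' tendsto_const_nhds
    (Real.tendsto_pow_mul_exp_neg_atTop_nhds_zero i) ?_ ?_
  · filter_upwards [eventually_ge_atTop 0] with x hx using by positivity
  · filter_upwards [eventually_ge_atTop 1] with x hx
    gcongr
    exact le_self_pow₀ hx (by norm_num)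

theorem tendsto_exp_neg_cube_mul_eval (p : ℝ[X]) :
    Tendsto (fun x => Real.exp (-x ^ 3) * p.eval x) atTop (𝓝 0) := by
  induction p using Polynomial.induction_on' with
  | add p q hp hq => simpa [mul_add] using hp.add hq
  | monomial i a =>
    simpa [mul_comm, mul_assoc] using (tendsto_pow_mul_exp_neg_cube i).const_mul a

theorem exists_finset_eval_diagPoly_eq_zero (n : ℕ) :
    ∃ S : Finset ℝ, S.card = N n ∧ (∀ x ∈ S, 0 < x) ∧ ∀ x ∈ S, (diagPoly n).eval x = 0 := by
  induction n with
  | zero => exact ⟨∅, by simp [N], by simp, by simp⟩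
  | succ n ih =>
    obtain ⟨S, hcard, hpos, hzero⟩ := ih
    set f : ℝ → ℝ := fun x => Real.exp (-x ^ 3) * (diagPoly n).eval x
    have hderiv (x : ℝ) :
        HasDerivAt f (-3 * (Real.exp (-x ^ 3) * (diagPoly (n + 1)).eval x)) x := by
      have hexp (z : ℝ) : HasDerivAt (fun z => Real.exp (-z ^ 3))
          (-3 * z ^ 2 * Real.exp (-z ^ 3)) z :=
        ((hasDerivAt_pow 3 z).fun_neg.exp).congr_deriv (by push_cast; ring)
      simpa only [coe_aeval_eq_eval] using hasDerivAt_mul_aeval_diagPoly hexp n x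
    obtain ⟨Z, hZcard, hZ0, hZ⟩ : ∃ Z : Finset ℝ,
        Z.card = N (n + 1) ∧ (∀ z ∈ Z, 0 ≤ z) ∧ ∀ z ∈ Z, f z = 0 := by
      rw [N_eq_two_mul_div_three] at hcard ⊢
      by_cases ha : 2 * n % 3 = 0
      · exact ⟨S, by omega, fun z hz => (hpos z hz).le,
          fun z hz => mul_eq_zero_of_right _ (hzero z hz)⟩
      · obtain ⟨R, -, -, hR⟩ := exists_diagPoly_eq_X_pow_mul_expand n
        refine ⟨insert 0 S, ?_, ?_, ?_⟩
        · rw [Finset.card_insert_of_notMem fun h => (hpos 0 h).false]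
          omega
        · exact (Finset.forall_mem_insert _ _ _).2 ⟨le_rfl, fun z hz => (hpos z hz).le⟩
        · exact (Finset.forall_mem_insert _ _ _).2
            ⟨by simp [f, hR, ha], fun z hz => mul_eq_zero_of_right _ (hzero z hz)⟩
    have hne (b : ℝ) : ∃ x, b < x ∧ f x ≠ 0 := by
      obtain ⟨x, hxb, hx⟩ := ((Ioi_infinite b).sdiff
        (finite_setOfPred_isRoot (diagPoly_monic_and_natDegree n).1.ne_zero)).nonempty
      exact ⟨x, hxb, mul_ne_zero (Real.exp_pos _).ne' hx⟩
    obtain ⟨C, hCcard, hC⟩ := exists_finset_deriv_eq_zero (fun x => (hderiv x).differentiableAt)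
      (tendsto_exp_neg_cube_mul_eval _) hne Z hZ
    refine ⟨C, hCcard.trans hZcard, fun c hc => ?_, fun c hc => ?_⟩
    · obtain ⟨⟨z, hz, hzc⟩, -⟩ := hC c hc
      exact (hZ0 z hz).trans_lt hzc
    · have hc := (hC c hc).2
      rw [(hderiv c).deriv] at hc
      simpa [Real.exp_ne_zero] using hc

theorem exists_roots_diagPoly_eq (n : ℕ) : ∃ S : Finset ℝ, S.card = N n ∧ (∀ x ∈ S, 0 < x) ∧
    (diagPoly n).roots = (2 * n % 3) • {0} + S.val := by
  obtain ⟨S, hcard, hpos, hzero⟩ := exists_finset_eval_diagPoly_eq_zero n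
  obtain ⟨R, hmonic, hdeg, hR⟩ := exists_diagPoly_eq_X_pow_mul_expand n
  have hinj : InjOn (· ^ 3) (S : Set ℝ) := fun x hx y hy h =>
    (pow_left_inj₀ (hpos x hx).le (hpos y hy).le three_ne_zero).1 h
  have hRprod : R = ∏ t ∈ S.image (· ^ 3), (X - C t) := by
    refine hmonic.eq_prod_X_sub_C_of_isRoot
      (by rw [Finset.card_image_of_injOn hinj, hdeg, hcard]) ?_
    simp only [Finset.mem_image]
    rintro _ ⟨x, hx, rfl⟩
    have hx0 := hzero x hx
    rw [hR, eval_mul, expand_eval, eval_pow, eval_X] at hx0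
    exact (mul_eq_zero.1 hx0).resolve_left (pow_ne_zero _ (hpos x hx).ne')
  have hfactor : diagPoly n = X ^ (2 * n % 3) * ∏ x ∈ S, (X ^ 3 - C (x ^ 3)) := by
    rw [hR, hRprod, Finset.prod_image hinj, map_prod]
    simp
  have hne : diagPoly n ≠ 0 := (diagPoly_monic_and_natDegree n).1.ne_zero
  rw [hfactor] at hne
  refine ⟨S, hcard, hpos, ?_⟩
  rw [hfactor, roots_mul hne, roots_X_pow, roots_prod _ _ (right_ne_zero_of_mul hne),
    Multiset.bind_congr fun x hx => roots_X_pow_three_sub_C_pow_three (hpos x hx).ne',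
    Multiset.bind_singleton, Multiset.map_id']

theorem exists_rootMultiplicity_diagPoly_eq (n : ℕ) :
    ∃ S : Finset ℝ, S.card = N n ∧ (∀ x ∈ S, 0 < x) ∧ ∀ x, rootMultiplicity x (diagPoly n) =
      (if x = 0 then 2 * n % 3 else 0) + if x ∈ S then 1 else 0 := by
  obtain ⟨S, hcard, hpos, hroots⟩ := exists_roots_diagPoly_eq n
  refine ⟨S, hcard, hpos, fun x => ?_⟩
  rw [← count_roots, hroots, Multiset.count_add, Multiset.count_nsmul, Multiset.count_singleton,
    Multiset.count_eq_of_nodup S.nodup]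
  split_ifs <;> simp_all

theorem P_ofReal_eq_zero_iff (n : ℕ) (x : ℝ) :
    P n x = 0 ↔ 0 < rootMultiplicity x (diagPoly n) := by
  rw [rootMultiplicity_pos (diagPoly_monic_and_natDegree n).1.ne_zero, IsRoot.def,
    P_eq_aeval_diagPoly, ← Complex.coe_algebraMap, aeval_algebraMap_apply_eq_algebraMap_eval,
    Complex.coe_algebraMap, Complex.ofReal_eq_zero]

theorem rootMultiplicity_ofReal_of_eval_eq_P {n : ℕ} {q : ℂ[X]} (hq : ∀ x, q.eval x = P n x)
    (x : ℝ) : q.rootMultiplicity (x : ℂ) = rootMultiplicity x (diagPoly n) := by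
  rw [eq_rootMultiplicity_map (algebraMap ℝ ℂ).injective x]
  congr
  exact Polynomial.funext fun z => by rw [hq, P_eq_aeval_diagPoly, eval_map_algebraMap]

/-- `Pₙ` has exactly `N n` zeros in `(0,∞)`, all simple;
`x = 0` is not a zero when `n ≡ 0 (mod 3)`, a zero of multiplicity exactly `2`
when `n ≡ 1 (mod 3)`, and of multiplicity exactly `1` when `n ≡ 2 (mod 3)`.
Here `q` is the polynomial whose evaluation is the entire function `Pₙ`. -/
theorem stmt13 (n : ℕ) (q : Polynomial ℂ) (hq : ∀ x : ℂ, q.eval x = P n x) :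
    {x : ℝ | 0 < x ∧ P n (x : ℂ) = 0}.ncard = N n ∧
    (∀ x : ℝ, 0 < x → P n (x : ℂ) = 0 → q.rootMultiplicity (x : ℂ) = 1) ∧
    (n % 3 = 0 → P n 0 ≠ 0) ∧
    (n % 3 = 1 → q.rootMultiplicity 0 = 2) ∧
    (n % 3 = 2 → q.rootMultiplicity 0 = 1) := by
  obtain ⟨S, hcard, hpos, hmult⟩ := exists_rootMultiplicity_diagPoly_eq n
  have hmult0 : rootMultiplicity 0 (diagPoly n) = 2 * n % 3 := by
    simpa [show (0 : ℝ) ∉ S from fun h => (hpos 0 h).false] using hmult 0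
  have hset : {x : ℝ | 0 < x ∧ P n (x : ℂ) = 0} = S := by
    ext x
    rw [Set.mem_ofPred_eq, P_ofReal_eq_zero_iff, hmult, Finset.mem_coe]
    by_cases hxS : x ∈ S
    · simp [hxS, hpos x hxS]
    · simp +contextual [hxS, LT.lt.ne']
  have hq0 := rootMultiplicity_ofReal_of_eval_eq_P hq 0
  rw [Complex.ofReal_zero, hmult0] at hq0
  refine ⟨by rw [hset, ncard_coe_finset, hcard], fun x hx hPx => ?_, fun h => ?_,
    fun h => by omega, fun h => by omega⟩
  · have hxS : x ∈ S := by rw [← Finset.mem_coe, ← hset]; exact ⟨hx, hPx⟩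
    rw [rootMultiplicity_ofReal_of_eval_eq_P hq, hmult, if_neg hx.ne', if_pos hxS]
  · simpa [hmult0] using (P_ofReal_eq_zero_iff n 0).not.2 (by omega)
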